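/- For positive semidefinite matrices A, B and a projection Π, with Q₂ⁱ(X‖Y) := tr[X·(X/Y)] where X/Y is the integral matrix quotient, one has Q₂ⁱ(A‖A+B) + Q₂ⁱ(B‖A+B) ≥ tr[(A⊕B)Π̂]²/tr[(A+B)⊕(A+B) Π̂] + tr[(A⊕B)(1−Π̂)]²/tr[(A+B)⊕(A+B)(1−Π̂)], where Π̂ = Π ⊕ (1−Π). -/

import Mathlib

open MeasureTheory Matrix Set ComplexOrder

variable {m : Type*} [Fintype m] [DecidableEq m]

/-- The integral matrix quotient `A/B := ∫₀^∞ (λ+B)⁻¹ A (λ+B)⁻¹ dλ`, defined entrywise. -/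
noncomputable def mq (A B : Matrix m m ℂ) : Matrix m m ℂ :=
  Matrix.of fun i j =>
    ∫ l in Set.Ioi (0:ℝ),
      ((l • (1 : Matrix m m ℂ) + B)⁻¹ * A * (l • (1 : Matrix m m ℂ) + B)⁻¹) i j

/-- Real power of a Hermitian matrix via the spectral decomposition (junk value `0` otherwise). -/
noncomputable def mrpow (A : Matrix m m ℂ) (r : ℝ) : Matrix m m ℂ :=
  if h : A.IsHermitian then
    (h.eigenvectorUnitary : Matrix m m ℂ) *
      Matrix.diagonal (fun i => ((h.eigenvalues i ^ r : ℝ) : ℂ)) *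
      star (h.eigenvectorUnitary : Matrix m m ℂ)
  else 0

/-- Trace norm of a Hermitian matrix: the sum of the absolute values of its eigenvalues
(junk value `0` otherwise). -/
noncomputable def traceNorm (A : Matrix m m ℂ) : ℝ :=
  if h : A.IsHermitian then ∑ i, |h.eigenvalues i| else 0

/-- Operator norm of a positive semidefinite (in particular Hermitian) matrix:
its largest eigenvalue (junk value `0` otherwise). -/
noncomputable def opNorm (A : Matrix m m ℂ) : ℝ :=
  if h : A.IsHermitian then ⨆ i, h.eigenvalues i else 0

/-- `Q₂^ι(A‖B) = tr[A (A/B)] = ∫₀^∞ tr[A (t+B)⁻¹ A (t+B)⁻¹] dt`. -/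
noncomputable def Q2iota (A B : Matrix m m ℂ) : ℝ :=
  ∫ t in Set.Ioi (0:ℝ),
    (A * (t • (1 : Matrix m m ℂ) + B)⁻¹ * A * (t • (1 : Matrix m m ℂ) + B)⁻¹).trace.re

/-- A projective measurement: a finite family of mutually orthogonal projections
summing to the identity. -/
structure PVM (m : Type*) [Fintype m] [DecidableEq m] where
  k : ℕ
  P : Fin k → Matrix m m ℂ
  herm : ∀ j, (P j).IsHermitian
  idem : ∀ j, P j * P j = P j
  orth : ∀ j j', j ≠ j' → P j * P j' = 0
  sum_eq : ∑ j, P j = 1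

/-- The value `∑_j (tr[ρΛ_j])^α (tr[σΛ_j])^{1-α}` of a projective measurement. -/
noncomputable def measVal (α : ℝ) (ρ σ : Matrix m m ℂ) (Λ : PVM m) : ℝ :=
  ∑ j, ((ρ * Λ.P j).trace.re) ^ α * ((σ * Λ.P j).trace.re) ^ (1 - α)

/-- The measured Rényi quantity `Q̌_α(ρ‖σ)`: for `α ∈ [1/2,1)` it is the infimum over
projective measurements of `∑_j (tr[ρΛ_j])^α (tr[σΛ_j])^{1-α}`. -/
noncomputable def Qmeas (α : ℝ) (ρ σ : Matrix m m ℂ) : ℝ :=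
  sInf {v | ∃ Λ : PVM m, v = measVal α ρ σ Λ}

/-- The measured Rényi divergence `Ď_α(ρ‖σ) = (α-1)⁻¹ log Q̌_α(ρ‖σ)`. -/
noncomputable def Dmeas (α : ℝ) (ρ σ : Matrix m m ℂ) : ℝ :=
  (1 / (α - 1)) * Real.log (Qmeas α ρ σ)

/-- The classical-quantum state `∑_x P(x) |x⟩⟨x| ⊗ ρ_x` as a matrix on `X × m`. -/
noncomputable def cqState {X : Type*} [Fintype X] [DecidableEq X]
    (P : X → ℝ) (ρ : X → Matrix m m ℂ) : Matrix (X × m) (X × m) ℂ :=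
  Matrix.of fun p q => if p.1 = q.1 then (P p.1 : ℂ) * ρ p.1 p.2 q.2 else 0

/-! In the eigenbasis `σ = U diag(s) U*` the quotient is a Schur product,
`ρ/σ = U (K ⊙ U*ρU) U*` with `K_pq = ∫₀^∞ (l+s_p)⁻¹ (l+s_q)⁻¹ dl ≥ 2/(s_p+s_q)`, so entrywise AM-GM
gives the variational bound `tr[ρ(ρ/σ)] ≥ 2 tr[ρZ] - tr[σZ²]` for every Hermitian `Z`.
For a projection `P`, the choice `Z = a P + b (1-P)` with `a = tr[ρP]/tr[σP]` and
`b = tr[ρ(1-P)]/tr[σ(1-P)]` turns it into data processing under the measurement `{P, 1-P}`.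
Applied to `ρ = A ⊕ B`, `σ = (A+B) ⊕ (A+B)` and `P = Π̂`, where the quotient is block diagonal,
this is the claim. -/

open Filter Topology ComplexConjugate

lemma integral_inv_add_sq {c : ℝ} (hc : 0 < c) : ∫ l in Ioi (0 : ℝ), ((l + c) ^ 2)⁻¹ = c⁻¹ := by
  have hderiv : ∀ x ∈ Ici (0 : ℝ), HasDerivAt (fun l => -(l + c)⁻¹) ((x + c) ^ 2)⁻¹ x := by
    intro x hx
    have hne : x + c ≠ 0 := by have : (0 : ℝ) ≤ x := hx; positivity
    rw [show ((x + c) ^ 2)⁻¹ = -(-1 / (x + c) ^ 2) by ring]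
    exact (((hasDerivAt_id x).add_const c).inv hne).neg
  have htend : Tendsto (fun l : ℝ => -(l + c)⁻¹) atTop (𝓝 0) := by
    simpa using (tendsto_atTop_add_const_right _ c tendsto_id).inv_tendsto_atTop.neg
  rw [integral_Ioi_of_hasDerivAt_of_nonneg' hderiv (fun _ _ => by positivity) htend]
  simp

lemma integrableOn_inv_add_sq {c : ℝ} (hc : 0 < c) :
    IntegrableOn (fun l : ℝ => ((l + c) ^ 2)⁻¹) (Ioi 0) :=
  Integrable.of_integral_ne_zero (by rw [integral_inv_add_sq hc]; positivity)

lemma integrableOn_inv_add_mul_inv_add {s t : ℝ} (hs : 0 < s) (ht : 0 < t) :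
    IntegrableOn (fun l : ℝ => (l + s)⁻¹ * (l + t)⁻¹) (Ioi 0) := by
  refine (integrableOn_inv_add_sq (lt_min hs ht)).mono' (by fun_prop) ?_
  filter_upwards [ae_restrict_mem measurableSet_Ioi] with l (hl : 0 < l)
  have hmin : 0 < l + min s t := by positivity
  rw [Real.norm_of_nonneg (by positivity), sq, mul_inv]
  gcongr <;> simp

noncomputable def quotientKernel (s t : ℝ) : ℝ :=
  ∫ l in Ioi (0 : ℝ), (l + s)⁻¹ * (l + t)⁻¹

lemma two_div_add_le_quotientKernel {s t : ℝ} (hs : 0 < s) (ht : 0 < t) :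
    2 / (s + t) ≤ quotientKernel s t := by
  have hm : 0 < (s + t) / 2 := by positivity
  rw [← inv_div, ← integral_inv_add_sq hm]
  refine setIntegral_mono_on (integrableOn_inv_add_sq hm)
    (integrableOn_inv_add_mul_inv_add hs ht) measurableSet_Ioi fun l (hl : 0 < l) => ?_
  rw [← mul_inv]
  apply inv_anti₀ (by positivity)
  nlinarith [sq_nonneg (s - t)]

lemma four_mul_re_mul_conj_le (r z : ℂ) {k w : ℝ} (hk : 0 < k) (hkw : 2 ≤ k * w) :
    4 * (r * conj z).re ≤ 2 * k * Complex.normSq r + w * Complex.normSq z := by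
  have hre : (r * conj z).re ≤ ‖r‖ * ‖z‖ := by
    simpa using Complex.re_le_norm (r * conj z)
  rw [Complex.normSq_eq_norm_sq, Complex.normSq_eq_norm_sq]
  -- `k (2k‖r‖² + w‖z‖² - 4‖r‖‖z‖) ≥ 2 (k‖r‖ - ‖z‖)²`
  have := mul_le_mul_of_nonneg_right hkw (sq_nonneg ‖z‖)
  refine le_of_mul_le_mul_left ?_ hk
  nlinarith [sq_nonneg (k * ‖r‖ - ‖z‖)]

namespace Matrix

variable {n : Type*} [Fintype n]

lemma IsHermitian.trace_mul_eq_sum {X Y : Matrix n n ℂ} (hY : Y.IsHermitian) :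
    (X * Y).trace = ∑ p, ∑ q, X p q * conj (Y p q) := by
  simp only [trace, diag_apply, mul_apply]
  exact Finset.sum_congr rfl fun p _ => Finset.sum_congr rfl fun q _ => by rw [← hY.apply q p]; rfl

lemma integral_mul_mul_apply {𝕜 : Type*} [RCLike 𝕜] {F : ℝ → Matrix n n 𝕜} {S : Set ℝ}
    (hF : ∀ p q, IntegrableOn (fun l => F l p q) S) (M N : Matrix n n 𝕜) (i j : n) :
    ∫ l in S, (M * F l * N) i j = (M * (of fun p q => ∫ l in S, F l p q) * N) i j := by
  simp only [mul_apply, of_apply, Finset.sum_mul]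
  rw [integral_finsetSum _ fun q _ => integrable_finsetSum _ fun p _ =>
    ((hF p q).const_mul _).mul_const _]
  refine Finset.sum_congr rfl fun q _ => ?_
  rw [integral_finsetSum _ fun p _ => ((hF p q).const_mul _).mul_const _]
  simp only [integral_mul_const, integral_const_mul]

lemma trace_fromBlocks {o α : Type*} [Fintype o] [AddCommMonoid α] (A : Matrix n n α)
    (B : Matrix n o α) (C : Matrix o n α) (D : Matrix o o α) :
    (fromBlocks A B C D).trace = A.trace + D.trace := by
  simp [trace, Fintype.sum_sum_type]

lemma PosDef.fromBlocks_zero {o 𝕜 : Type*} [Fintype o] [RCLike 𝕜] {C : Matrix n n 𝕜}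
    {D : Matrix o o 𝕜} (hC : C.PosDef) (hD : D.PosDef) : (fromBlocks C 0 0 D).PosDef := by
  refine .of_dotProduct_mulVec_pos (hC.1.fromBlocks (by simp) hD.1) fun x hx => ?_
  obtain ⟨y, z, rfl⟩ : ∃ y z, x = Sum.elim y z := ⟨_, _, (Sum.elim_comp_inl_inr x).symm⟩
  rw [fromBlocks_mulVec, Function.star_sumElim, sumElim_dotProduct_sumElim]
  simp only [Sum.elim_comp_inl, Sum.elim_comp_inr, zero_mulVec, add_zero, zero_add]
  by_cases h : y = 0
  · have h' : z ≠ 0 := fun h' => hx (by rw [h, h', Sum.elim_zero_zero])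
    rw [h, mulVec_zero, dotProduct_zero, zero_add]
    exact hD.dotProduct_mulVec_pos h'
  · exact add_pos_of_pos_of_nonneg (hC.dotProduct_mulVec_pos h)
      (hD.posSemidef.dotProduct_mulVec_nonneg _)

variable [DecidableEq n]

open Unitary

lemma trace_conjStarAlgAut {α : Type*} [CommRing α] [StarRing α] (u : unitary (Matrix n n α))
    (X : Matrix n n α) : (conjStarAlgAut α _ u X).trace = X.trace := by
  rw [conjStarAlgAut_apply, trace_mul_cycle, coe_star_mul_self, one_mul]

lemma IsHermitian.inv_smul_one_add {σ : Matrix n n ℂ} (hσ : σ.IsHermitian) {l : ℝ}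
    (hl : ∀ p, l + hσ.eigenvalues p ≠ 0) :
    (l • 1 + σ)⁻¹ = conjStarAlgAut ℂ _ hσ.eigenvectorUnitary
      (diagonal fun p => (((l + hσ.eigenvalues p)⁻¹ : ℝ) : ℂ)) := by
  set φ := conjStarAlgAut ℂ (Matrix n n ℂ) hσ.eigenvectorUnitary
  have hshift : l • 1 + σ = φ (diagonal fun p => ((l + hσ.eigenvalues p : ℝ) : ℂ)) := by
    conv_lhs => rw [hσ.spectral_theorem, ← Complex.coe_smul, ← map_one φ, ← map_smul, ← map_add]
    congr 1
    ext p q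
    by_cases hpq : p = q
    · subst hpq
      simp [Complex.real_smul]
    · simp [hpq]
  refine inv_eq_left_inv ?_
  rw [hshift, ← map_mul, diagonal_mul_diagonal, ← map_one φ, ← diagonal_one]
  congr 2
  ext p
  rw [← Complex.ofReal_mul, inv_mul_cancel₀ (hl p), Complex.ofReal_one]

lemma IsHermitian.inv_smul_one_add_mul_mul_inv {σ : Matrix n n ℂ} (hσ : σ.IsHermitian) {l : ℝ}
    (hl : ∀ p, l + hσ.eigenvalues p ≠ 0) (ρ : Matrix n n ℂ) :
    (l • 1 + σ)⁻¹ * ρ * (l • 1 + σ)⁻¹ = conjStarAlgAut ℂ _ hσ.eigenvectorUnitary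
      ((of fun p q => (((l + hσ.eigenvalues p)⁻¹ * (l + hσ.eigenvalues q)⁻¹ : ℝ) : ℂ)) ⊙
        (conjStarAlgAut ℂ _ hσ.eigenvectorUnitary).symm ρ) := by
  set φ := conjStarAlgAut ℂ (Matrix n n ℂ) hσ.eigenvectorUnitary
  rw [hσ.inv_smul_one_add hl]
  conv_lhs => rw [← φ.apply_symm_apply ρ, ← map_mul, ← map_mul]
  congr 1
  ext p q
  simp only [diagonal_mul, mul_diagonal, hadamard_apply, of_apply]
  push_cast
  ring

theorem mq_eq_conjStarAlgAut_hadamard (ρ : Matrix n n ℂ) {σ : Matrix n n ℂ} (hσ : σ.PosDef) :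
    mq ρ σ = conjStarAlgAut ℂ _ hσ.1.eigenvectorUnitary
      ((of fun p q => (quotientKernel (hσ.1.eigenvalues p) (hσ.1.eigenvalues q) : ℂ)) ⊙
        (conjStarAlgAut ℂ _ hσ.1.eigenvectorUnitary).symm ρ) := by
  have hs := hσ.eigenvalues_pos
  ext i j
  rw [mq, of_apply, setIntegral_congr_fun measurableSet_Ioi fun l (hl : 0 < l) => by
    rw [hσ.1.inv_smul_one_add_mul_mul_inv (fun p => (add_pos hl (hs p)).ne') ρ]]
  simp only [conjStarAlgAut_apply]
  rw [integral_mul_mul_apply fun p q => ?_]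
  · simp only [of_apply, hadamard_apply, integral_mul_const, integral_complex_ofReal]
    rfl
  · simp only [of_apply, hadamard_apply]
    exact (integrableOn_inv_add_mul_inv_add (hs p) (hs q)).ofReal.mul_const _

lemma two_mul_re_trace_mul_le_of_diagonal {R ζ : Matrix n n ℂ} (hR : R.IsHermitian)
    (hζ : ζ.IsHermitian) {s : n → ℝ} (hs : ∀ p, 0 < s p) :
    2 * (R * ζ).trace.re ≤
      (R * ((of fun p q => (quotientKernel (s p) (s q) : ℂ)) ⊙ R)).trace.re +
        (diagonal (fun p => (s p : ℂ)) * ζ * ζ).trace.re := by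
  have hRζ : (R * ζ).trace.re = ∑ p, ∑ q, (R p q * conj (ζ p q)).re := by
    simp only [hζ.trace_mul_eq_sum, Complex.re_sum]
  have hRR : (R * ((of fun p q => (quotientKernel (s p) (s q) : ℂ)) ⊙ R)).trace.re =
      ∑ p, ∑ q, quotientKernel (s p) (s q) * Complex.normSq (R p q) := by
    simp only [trace_mul_comm R, hR.trace_mul_eq_sum, hadamard_apply, of_apply, mul_assoc,
      Complex.mul_conj, Complex.re_sum]
    norm_cast
  have hζζ : (diagonal (fun p => (s p : ℂ)) * ζ * ζ).trace.re =
      ∑ p, ∑ q, s p * Complex.normSq (ζ p q) := by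
    rw [hζ.trace_mul_eq_sum]
    simp only [diagonal_mul, mul_assoc, Complex.mul_conj, Complex.re_sum]
    norm_cast
  have hsymm : ∑ p, ∑ q, s q * Complex.normSq (ζ p q) = ∑ p, ∑ q, s p * Complex.normSq (ζ p q) := by
    rw [Finset.sum_comm]
    refine Finset.sum_congr rfl fun p _ => Finset.sum_congr rfl fun q _ => ?_
    rw [← hζ.apply q p, Complex.star_def, Complex.normSq_conj]
  have hterm : ∀ p q, 4 * (R p q * conj (ζ p q)).re ≤
      2 * quotientKernel (s p) (s q) * Complex.normSq (R p q) +
        (s p + s q) * Complex.normSq (ζ p q) := fun p q => by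
    have hk := two_div_add_le_quotientKernel (hs p) (hs q)
    have hst : 0 < s p + s q := add_pos (hs p) (hs q)
    refine four_mul_re_mul_conj_le _ _ ((div_pos two_pos hst).trans_le hk) ?_
    rwa [div_le_iff₀ hst] at hk
  have hsum : 4 * ∑ p, ∑ q, (R p q * conj (ζ p q)).re ≤
      2 * ∑ p, ∑ q, quotientKernel (s p) (s q) * Complex.normSq (R p q) +
        (∑ p, ∑ q, s p * Complex.normSq (ζ p q) + ∑ p, ∑ q, s q * Complex.normSq (ζ p q)) := by
    simpa only [Finset.mul_sum, add_mul, Finset.sum_add_distrib, mul_assoc] using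
      Finset.sum_le_sum fun p (_ : p ∈ Finset.univ) =>
        Finset.sum_le_sum fun q (_ : q ∈ Finset.univ) => hterm p q
  rw [hRζ, hRR, hζζ]
  linarith

theorem two_mul_re_trace_mul_le {ρ σ Z : Matrix n n ℂ} (hρ : ρ.IsHermitian) (hσ : σ.PosDef)
    (hZ : Z.IsHermitian) :
    2 * (ρ * Z).trace.re ≤ (ρ * mq ρ σ).trace.re + (σ * Z * Z).trace.re := by
  set φ := conjStarAlgAut ℂ (Matrix n n ℂ) hσ.1.eigenvectorUnitary
  have htrace (X : Matrix n n ℂ) : (φ.symm X).trace = X.trace := by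
    rw [conjStarAlgAut_symm, trace_conjStarAlgAut]
  have hσ' : φ.symm σ = diagonal fun p => (hσ.1.eigenvalues p : ℂ) := by
    rw [conjStarAlgAut_symm]
    exact hσ.1.conjStarAlgAut_star_eigenvectorUnitary
  have hmq := congrArg φ.symm (mq_eq_conjStarAlgAut_hadamard ρ hσ)
  rw [φ.symm_apply_apply] at hmq
  have key := two_mul_re_trace_mul_le_of_diagonal (hρ.isSelfAdjoint.map φ.symm)
    (hZ.isSelfAdjoint.map φ.symm) hσ.eigenvalues_pos
  rwa [← hσ', ← hmq, ← map_mul, ← map_mul, ← map_mul, ← map_mul, htrace, htrace, htrace] at key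

lemma re_trace_mul_smul_add_smul (X P Q : Matrix n n ℂ) (a b : ℝ) :
    (X * (a • P + b • Q)).trace.re = a * (X * P).trace.re + b * (X * Q).trace.re := by
  simp [mul_add, trace_add, trace_smul]

theorem sq_div_add_sq_div_le_re_trace_mul_mq {ρ σ P : Matrix n n ℂ} (hρ : ρ.IsHermitian)
    (hσ : σ.PosDef) (hP : P.IsHermitian) (hP2 : P * P = P) (hd₁ : 0 < (σ * P).trace.re)
    (hd₂ : 0 < (σ * (1 - P)).trace.re) :
    (ρ * P).trace.re ^ 2 / (σ * P).trace.re + (ρ * (1 - P)).trace.re ^ 2 / (σ * (1 - P)).trace.re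
      ≤ (ρ * mq ρ σ).trace.re := by
  set a := (ρ * P).trace.re / (σ * P).trace.re with ha
  set b := (ρ * (1 - P)).trace.re / (σ * (1 - P)).trace.re with hb
  -- the optimal `Z` in the variational bound, among combinations of `P` and `1 - P`
  set Z := a • P + b • (1 - P)
  have hZ : Z.IsHermitian :=
    (hP.smul (IsSelfAdjoint.all a)).add ((isHermitian_one.sub hP).smul (IsSelfAdjoint.all b))
  have hZZ : Z * Z = (a ^ 2) • P + (b ^ 2) • (1 - P) := by
    have h₁ : P * (1 - P) = 0 := by rw [mul_sub, mul_one, hP2, sub_self]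
    have h₂ : (1 - P) * P = 0 := by rw [sub_mul, one_mul, hP2, sub_self]
    have h₃ : (1 - P) * (1 - P) = 1 - P := (IsIdempotentElem.one_sub hP2).eq
    simp only [Z, add_mul, mul_add, smul_mul_smul_comm, hP2, h₁, h₂, h₃, smul_zero, add_zero,
      zero_add, sq]
  have key := two_mul_re_trace_mul_le hρ hσ hZ
  rw [mul_assoc, hZZ, re_trace_mul_smul_add_smul, re_trace_mul_smul_add_smul] at key
  have e₁ : (ρ * P).trace.re ^ 2 / (σ * P).trace.re =
      2 * (a * (ρ * P).trace.re) - a ^ 2 * (σ * P).trace.re := by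
    rw [ha]; field_simp; ring
  have e₂ : (ρ * (1 - P)).trace.re ^ 2 / (σ * (1 - P)).trace.re =
      2 * (b * (ρ * (1 - P)).trace.re) - b ^ 2 * (σ * (1 - P)).trace.re := by
    rw [hb]; field_simp; ring
  linarith

section Blocks

variable {o : Type*} [Fintype o] [DecidableEq o]

theorem mq_fromBlocks (A : Matrix n n ℂ) (B : Matrix o o ℂ) {C : Matrix n n ℂ} {D : Matrix o o ℂ}
    (hC : C.PosSemidef) (hD : D.PosSemidef) :
    mq (fromBlocks A 0 0 B) (fromBlocks C 0 0 D) = fromBlocks (mq A C) 0 0 (mq B D) := by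
  have hblock : ∀ l ∈ Ioi (0 : ℝ),
      (l • 1 + fromBlocks C 0 0 D)⁻¹ * fromBlocks A 0 0 B * (l • 1 + fromBlocks C 0 0 D)⁻¹ =
        fromBlocks ((l • 1 + C)⁻¹ * A * (l • 1 + C)⁻¹) 0 0 ((l • 1 + D)⁻¹ * B * (l • 1 + D)⁻¹) := by
    intro l (hl : 0 < l)
    have hunitC := ((PosDef.one.smul hl).add_posSemidef hC).isUnit
    have hunitD := ((PosDef.one.smul hl).add_posSemidef hD).isUnit
    simp only [← fromBlocks_one, fromBlocks_smul, fromBlocks_add, smul_zero, add_zero]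
    rw [inv_fromBlocks_zero₂₁_of_isUnit_iff _ _ _ (iff_of_true hunitC hunitD)]
    simp [fromBlocks_multiply]
  ext (i | i) (j | j) <;>
    simp only [mq, of_apply, setIntegral_congr_fun measurableSet_Ioi fun l hl =>
      congrFun₂ (hblock l hl) _ _] <;> simp

end Blocks

end Matrix

/-- The data-processing step: for a projection `Π` with `Π̂ = Π ⊕ (1-Π)`,
`Q₂^ι(A‖A+B) + Q₂^ι(B‖A+B)` dominates the corresponding two-outcome classical quantity. -/
theorem data_processing_step (A B Pr : Matrix m m ℂ)
    (hA : A.PosSemidef) (hB : B.PosSemidef) (hAB : (A + B).PosDef)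
    (hPr : Pr.IsHermitian) (hPr2 : Pr * Pr = Pr)
    (hd₁ : 0 < ((Matrix.fromBlocks (A + B) 0 0 (A + B)) *
        (Matrix.fromBlocks Pr 0 0 (1 - Pr))).trace.re)
    (hd₂ : 0 < ((Matrix.fromBlocks (A + B) 0 0 (A + B)) *
        (1 - Matrix.fromBlocks Pr 0 0 (1 - Pr))).trace.re) :
    ((Matrix.fromBlocks A 0 0 B) * (Matrix.fromBlocks Pr 0 0 (1 - Pr))).trace.re ^ 2
        / ((Matrix.fromBlocks (A + B) 0 0 (A + B)) *
            (Matrix.fromBlocks Pr 0 0 (1 - Pr))).trace.re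
      + ((Matrix.fromBlocks A 0 0 B) * (1 - Matrix.fromBlocks Pr 0 0 (1 - Pr))).trace.re ^ 2
        / ((Matrix.fromBlocks (A + B) 0 0 (A + B)) *
            (1 - Matrix.fromBlocks Pr 0 0 (1 - Pr))).trace.re
    ≤ (A * mq A (A + B)).trace.re + (B * mq B (A + B)).trace.re := by
  have hP : (fromBlocks Pr 0 0 (1 - Pr)).IsHermitian :=
    hPr.fromBlocks (by simp) (isHermitian_one.sub hPr)
  have hP2 :
      fromBlocks Pr 0 0 (1 - Pr) * fromBlocks Pr 0 0 (1 - Pr) = fromBlocks Pr 0 0 (1 - Pr) := by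
    rw [fromBlocks_multiply, hPr2, (IsIdempotentElem.one_sub hPr2).eq]
    simp
  calc _ ≤ _ := sq_div_add_sq_div_le_re_trace_mul_mq (hA.1.fromBlocks (by simp) hB.1)
        (hAB.fromBlocks_zero hAB) hP hP2 hd₁ hd₂
    _ = _ := by
      rw [mq_fromBlocks _ _ hAB.posSemidef hAB.posSemidef, fromBlocks_multiply, trace_fromBlocks]
      simp
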